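/- Scaled containment: Let P be an H-polytope and Q a V-polytope in R^d, both with 0 in their interiors. Then there exists λ > 0 such that λP ⊆ S ⊆ (1/√d)·Q for some box S = Π_i [-λ_i, λ_i], and consequently the containment λP ⊆ Q is certified in the initial relaxation step t = 2 of the sos hierarchy. -/

import Mathlib

open Matrix MvPolynomial Pointwise

/-- Sum of squares in ℝ[x,z] (variables indexed by `Fin d ⊕ Fin d`). -/
def IsSOS {d : ℕ} (p : MvPolynomial (Fin d ⊕ Fin d) ℝ) : Prop :=
  ∃ (n : ℕ) (h : Fin n → MvPolynomial (Fin d ⊕ Fin d) ℝ), p = ∑ i, h i ^ 2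

open Filter Topology

/-!
Since `P` is bounded and contains `0`, the rows of `A` positively span `ℝᵈ`: otherwise a
separating functional gives a direction `v ≠ 0` with `A v ≤ 0`, and the ray `ℝ≥0 v` lies in `P`.
Since `0 ∈ int Q`, the vertices of `Q` positively span `ℝᵈ` as well. Writing `±eᵢ` as nonnegative
combinations therefore makes `c ∓ xᵢ` a nonnegative combination of `1` and the constraints of
`λP` once `λ` is small, and `r ∓ zᵢ` one of `1` and the constraints of `Q°` once `r` is large.
On the box `[-c, c]ᵈ × [-r, r]ᵈ` with `d c r ≤ 1` the polynomial `1 - x·z` has an explicit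
degree-4 certificate, and substituting the affine consequences into it (transitivity of truncated
quadratic modules) certifies `λP ⊆ Q`. Taking `c` small also puts the box inside `(1/√d) Q`,
because `Q` contains a ball around `0`.
-/

theorem IsSumSq.map {R S F : Type*} [Semiring R] [Semiring S] [FunLike F R S] [RingHomClass F R S]
    (f : F) {s : R} (hs : IsSumSq s) : IsSumSq (f s) := by
  induction hs with
  | zero => rw [map_zero]; exact .zero
  | sq_add a _ ih => simpa using ih.sq_add (f a)

theorem IsSumSq.smul_of_nonneg {A : Type*} [CommSemiring A] [Algebra ℝ A] {c : ℝ} (hc : 0 ≤ c)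
    {s : A} (hs : IsSumSq s) : IsSumSq (c • s) := by
  have hsq : c = √c * √c := (Real.mul_self_sqrt hc).symm
  rw [Algebra.smul_def, hsq, map_mul]
  exact (IsSumSq.mul_self _).mul hs

theorem IsSumSq.isSOS {d : ℕ} {p : MvPolynomial (Fin d ⊕ Fin d) ℝ} (hp : IsSumSq p) : IsSOS p := by
  induction hp with
  | zero => exact ⟨0, Fin.elim0, by simp⟩
  | sq_add a _ ih =>
    obtain ⟨n, h, rfl⟩ := ih
    exact ⟨n + 1, Fin.cons a h, by simp [Fin.sum_univ_succ, sq]⟩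

section TruncQuadModule

variable {σ ι κ : Type*} [Fintype ι] [Fintype κ]

/-- The truncated quadratic module `QM_t(g)`: the generators are meant to be affine, so their
multipliers are sums of squares of degree at most `2 * t - 2`. -/
def truncQuadModule (t : ℕ) (g : ι → MvPolynomial σ ℝ) : PointedCone ℝ (MvPolynomial σ ℝ) where
  carrier := {p | ∃ (s₀ : MvPolynomial σ ℝ) (s : ι → MvPolynomial σ ℝ), IsSumSq s₀ ∧
    (∀ i, IsSumSq (s i)) ∧ s₀.totalDegree ≤ 2 * t ∧ (∀ i, (s i).totalDegree ≤ 2 * t - 2) ∧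
    p = s₀ + ∑ i, s i * g i}
  add_mem' := by
    rintro _ _ ⟨s₀, s, hs₀, hs, hd₀, hd, rfl⟩ ⟨s₀', s', hs₀', hs', hd₀', hd', rfl⟩
    refine ⟨s₀ + s₀', s + s', hs₀.add hs₀', fun i => (hs i).add (hs' i),
      (totalDegree_add _ _).trans (max_le hd₀ hd₀'),
      fun i => (totalDegree_add _ _).trans (max_le (hd i) (hd' i)), ?_⟩
    simp only [Pi.add_apply, add_mul, Finset.sum_add_distrib]
    abel
  zero_mem' := ⟨0, 0, .zero, fun _ => .zero, by simp, by simp, by simp⟩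
  smul_mem' := by
    rintro c _ ⟨s₀, s, hs₀, hs, hd₀, hd, rfl⟩
    refine ⟨(c : ℝ) • s₀, fun i => (c : ℝ) • s i, hs₀.smul_of_nonneg c.2,
      fun i => (hs i).smul_of_nonneg c.2, (totalDegree_smul_le _ _).trans hd₀,
      fun i => (totalDegree_smul_le _ _).trans (hd i), ?_⟩
    simp [smul_add, Finset.smul_sum, smul_mul_assoc]

variable {t : ℕ} {g : ι → MvPolynomial σ ℝ}

theorem sumSq_mem_truncQuadModule {q : MvPolynomial σ ℝ} (hq : IsSumSq q)
    (hdeg : q.totalDegree ≤ 2 * t) : q ∈ truncQuadModule t g :=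
  ⟨q, 0, hq, fun _ => .zero, hdeg, by simp, by simp⟩

theorem sumSq_mul_mem_truncQuadModule {q : MvPolynomial σ ℝ} (hq : IsSumSq q)
    (hdeg : q.totalDegree ≤ 2 * t - 2) (i : ι) : q * g i ∈ truncQuadModule t g := by
  classical
  refine ⟨0, Pi.single i q, .zero, fun j => ?_, by simp, fun j => ?_, by simp [Pi.single_apply]⟩
  · rcases eq_or_ne j i with rfl | hj
    · simpa using hq
    · simp [hj]
  · rcases eq_or_ne j i with rfl | hj
    · simpa using hdeg
    · simp [hj]

theorem sq_mul_mem_truncQuadModule {q : MvPolynomial σ ℝ} (hdeg : q.totalDegree ≤ t - 1)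
    (i : ι) : q ^ 2 * g i ∈ truncQuadModule t g :=
  sumSq_mul_mem_truncQuadModule (IsSquare.sq q).isSumSq
    ((totalDegree_pow _ _).trans (by omega)) i

theorem hull_le_truncQuadModule :
    PointedCone.hull ℝ (insert 1 (Set.range g)) ≤ truncQuadModule t g := by
  refine Submodule.span_le.2 (Set.insert_subset ?_ (Set.range_subset_iff.2 fun i => ?_))
  · exact sumSq_mem_truncQuadModule IsSumSq.one (by simp)
  · simpa using sumSq_mul_mem_truncQuadModule (t := t) IsSumSq.one (by simp) i

theorem mul_mem_truncQuadModule_of_mem_one (ht : 1 ≤ t) {q p : MvPolynomial σ ℝ}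
    (hq : IsSumSq q) (hdeg : q.totalDegree ≤ 2 * t - 2) (hp : p ∈ truncQuadModule 1 g) :
    q * p ∈ truncQuadModule t g := by
  obtain ⟨s₀, s, hs₀, hs, hd₀, hd, rfl⟩ := hp
  rw [mul_add, Finset.mul_sum]
  refine add_mem (sumSq_mem_truncQuadModule (hq.mul hs₀) ?_) (sum_mem fun i _ => ?_)
  · exact (totalDegree_mul _ _).trans (by omega)
  · rw [← mul_assoc]
    exact sumSq_mul_mem_truncQuadModule (hq.mul (hs i))
      ((totalDegree_mul _ _).trans (by have := hd i; omega)) i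

theorem truncQuadModule_le_of_forall_mem_one (ht : 1 ≤ t) {h : κ → MvPolynomial σ ℝ}
    (hh : ∀ j, h j ∈ truncQuadModule 1 g) : truncQuadModule t h ≤ truncQuadModule t g := by
  rintro _ ⟨s₀, s, hs₀, hs, hd₀, hd, rfl⟩
  exact add_mem (sumSq_mem_truncQuadModule hs₀ hd₀)
    (sum_mem fun j _ => mul_mem_truncQuadModule_of_mem_one ht (hs j) (hd j) (hh j))

theorem eval_nonneg_of_mem_truncQuadModule {p : MvPolynomial σ ℝ} (hp : p ∈ truncQuadModule t g)
    {x : σ → ℝ} (hx : ∀ i, 0 ≤ eval x (g i)) : 0 ≤ eval x p := by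
  obtain ⟨s₀, s, hs₀, hs, -, -, rfl⟩ := hp
  simp only [map_add, map_sum, map_mul]
  exact add_nonneg (hs₀.map _).nonneg
    (Finset.sum_nonneg fun i _ => mul_nonneg ((hs i).map _).nonneg (hx i))

end TruncQuadModule

section Box

variable {σ : Type*}

noncomputable def boxConstraint (ρ : σ → ℝ) : σ × Bool → MvPolynomial σ ℝ
  | (v, true) => C (ρ v) - X v
  | (v, false) => C (ρ v) + X v

theorem totalDegree_X_add_C_le (v : σ) (c : ℝ) :
    (X v + C c : MvPolynomial σ ℝ).totalDegree ≤ 1 :=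
  (totalDegree_add _ _).trans (by simp [totalDegree_X])

theorem totalDegree_X_sub_C_le (v : σ) (c : ℝ) :
    (X v - C c : MvPolynomial σ ℝ).totalDegree ≤ 1 := by
  simpa [sub_eq_add_neg] using totalDegree_X_add_C_le v (-c)

theorem abs_le_of_boxConstraint_mem {ι : Type*} [Fintype ι] {t : ℕ} {g : ι → MvPolynomial σ ℝ}
    {ρ : σ → ℝ} {v : σ} (h : ∀ s, boxConstraint ρ (v, s) ∈ truncQuadModule t g) {x : σ → ℝ}
    (hx : ∀ i, 0 ≤ eval x (g i)) : |x v| ≤ ρ v := by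
  have hle := eval_nonneg_of_mem_truncQuadModule (h true) hx
  have hge := eval_nonneg_of_mem_truncQuadModule (h false) hx
  simp only [boxConstraint, map_sub, map_add, eval_C, eval_X] at hle hge
  exact abs_le.2 ⟨by linarith, by linarith⟩

/-- The degree-4 certificate of `x z ≤ c r` on the box `|x| ≤ c`, `|z| ≤ r`, from the identity
`4c²(cr - xz) = c((x+c)²(r-z) + (x-c)²(r+z)) + r((x+c)²(c-x) + (x-c)²(c+x))`. -/
theorem C_mul_sub_X_mul_X_mem_truncQuadModule [Fintype σ] {ρ : σ → ℝ} {v w : σ} (hv : 0 < ρ v)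
    (hw : 0 ≤ ρ w) : C (ρ v * ρ w) - X v * X w ∈ truncQuadModule 2 (boxConstraint ρ) := by
  set M := truncQuadModule 2 (boxConstraint ρ)
  have hsq (j) : (X v + C (ρ v)) ^ 2 * boxConstraint ρ j ∈ M ∧
      (X v - C (ρ v)) ^ 2 * boxConstraint ρ j ∈ M :=
    ⟨sq_mul_mem_truncQuadModule (totalDegree_X_add_C_le v _) j,
      sq_mul_mem_truncQuadModule (totalDegree_X_sub_C_le v _) j⟩
  have hcert := M.smul_mem (by positivity : 0 ≤ 1 / (4 * ρ v ^ 2))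
    (add_mem (M.smul_mem hv.le (add_mem (hsq (w, true)).1 (hsq (w, false)).2))
      (M.smul_mem hw (add_mem (hsq (v, true)).1 (hsq (v, false)).2)))
  convert hcert using 1
  simp only [boxConstraint, smul_eq_C_mul]
  calc C (ρ v * ρ w) - X v * X w
      = C (1 / (4 * ρ v ^ 2) * (4 * ρ v ^ 2)) * (C (ρ v * ρ w) - X v * X w) := by
        rw [one_div_mul_cancel (by positivity), map_one, one_mul]
    _ = _ := by simp only [map_mul, map_pow, map_ofNat]; ring

theorem one_sub_sum_X_mul_X_mem_truncQuadModule {n : Type*} [Fintype n] {ρ : n ⊕ n → ℝ}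
    (hx : ∀ i, 0 < ρ (.inl i)) (hz : ∀ i, 0 ≤ ρ (.inr i))
    (hρ : ∑ i, ρ (.inl i) * ρ (.inr i) ≤ 1) :
    (1 - ∑ i, X (.inl i) * X (.inr i) : MvPolynomial (n ⊕ n) ℝ) ∈
      truncQuadModule 2 (boxConstraint ρ) := by
  have hconst : (1 - ∑ i, ρ (.inl i) * ρ (.inr i)) • 1 ∈ truncQuadModule 2 (boxConstraint ρ) :=
    PointedCone.smul_mem _ (sub_nonneg.2 hρ) (sumSq_mem_truncQuadModule IsSumSq.one (by simp))
  have hsum : ∑ i, (C (ρ (.inl i) * ρ (.inr i)) - X (.inl i) * X (.inr i)) ∈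
      truncQuadModule 2 (boxConstraint ρ) :=
    sum_mem fun i _ => C_mul_sub_X_mul_X_mem_truncQuadModule (hx i) (hz i)
  convert add_mem hconst hsum using 1
  simp [Finset.sum_sub_distrib, smul_eq_C_mul]

end Box

section Affine

variable {σ ι κ : Type*} [Fintype ι] [Fintype κ]

noncomputable def affinePoly (e : κ → σ) (α : ℝ) (v : κ → ℝ) : MvPolynomial σ ℝ :=
  C α - ∑ j, C (v j) * X (e j)

theorem sum_smul_affinePoly (e : κ → σ) (u α : ι → ℝ) (v : ι → κ → ℝ) :
    ∑ m, u m • affinePoly e (α m) (v m) = affinePoly e (∑ m, u m * α m) (∑ m, u m • v m) := by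
  simp only [affinePoly, smul_sub, Finset.sum_sub_distrib, Finset.smul_sum, smul_eq_C_mul,
    map_sum, map_mul, Finset.sum_apply, Pi.smul_apply, smul_eq_mul, Finset.sum_mul, mul_assoc]
  rw [Finset.sum_comm]

theorem affinePoly_mem_hull (e : κ → σ) {u α : ι → ℝ} {v : ι → κ → ℝ} {ρ : ℝ}
    (hu : ∀ m, 0 ≤ u m) (hρ : ∑ m, u m * α m ≤ ρ) :
    affinePoly e ρ (∑ m, u m • v m) ∈
      PointedCone.hull ℝ (insert 1 (Set.range fun m => affinePoly e (α m) (v m))) := by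
  have hsplit : affinePoly e ρ (∑ m, u m • v m) =
      (ρ - ∑ m, u m * α m) • 1 + ∑ m, u m • affinePoly e (α m) (v m) := by
    rw [sum_smul_affinePoly]
    simp [affinePoly, smul_eq_C_mul]
  rw [hsplit]
  refine add_mem (PointedCone.smul_mem _ (sub_nonneg.2 hρ) (PointedCone.subset_hull (.inl rfl)))
    (sum_mem fun m _ => PointedCone.smul_mem _ (hu m) (PointedCone.subset_hull (.inr ⟨m, rfl⟩)))

theorem boxConstraint_comp_eq_affinePoly [DecidableEq κ] (e : κ → σ) (ρ : σ → ℝ) (i : κ)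
    (s : Bool) : boxConstraint ρ (e i, s) =
      affinePoly e (ρ (e i)) (if s then Pi.single i 1 else -Pi.single i 1) := by
  cases s <;> simp [boxConstraint, affinePoly, Pi.single_apply, sub_eq_add_neg]

theorem exists_boxConstraint_mem_hull [DecidableEq κ] (e : κ → σ) {v : ι → κ → ℝ}
    (hv : PointedCone.hull ℝ (Set.range v) = ⊤) :
    ∃ U : κ × Bool → ι → ℝ, ∀ (α : ι → ℝ) (ρ : σ → ℝ) (i : κ) (s : Bool),
      ∑ m, U (i, s) m * α m ≤ ρ (e i) → boxConstraint ρ (e i, s) ∈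
        PointedCone.hull ℝ (insert 1 (Set.range fun m => affinePoly e (α m) (v m))) := by
  have hcoeff (y : κ → ℝ) : ∃ u : ι → ℝ, (∀ m, 0 ≤ u m) ∧ ∑ m, u m • v m = y := by
    obtain ⟨u, hu⟩ :=
      (Submodule.mem_span_range_iff_exists_fun _).1 (hv ▸ Submodule.mem_top (x := y))
    exact ⟨fun m => u m, fun m => (u m).2, hu⟩
  choose U hU0 hU using fun j : κ × Bool =>
    hcoeff (if j.2 then Pi.single j.1 1 else -Pi.single j.1 1)
  refine ⟨U, fun α ρ i s hρ => ?_⟩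
  rw [boxConstraint_comp_eq_affinePoly, ← hU (i, s)]
  exact affinePoly_mem_hull e (hU0 _) hρ

end Affine

section Geometry

theorem PointedCone.hull_eq_top_of_zero_mem_interior_convexHull {E : Type*} [AddCommGroup E]
    [Module ℝ E] [TopologicalSpace E] [ContinuousSMul ℝ E] {s : Set E}
    (h : 0 ∈ interior (convexHull ℝ s)) : PointedCone.hull ℝ s = ⊤ := by
  refine eq_top_iff.2 fun y _ => ?_
  have hnhds : ∀ᶠ t : ℝ in 𝓝 0, t • y ∈ convexHull ℝ s :=
    (tendsto_id.smul_const y).eventually (by simpa using mem_interior_iff_mem_nhds.1 h)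
  obtain ⟨t, ht, hty⟩ := hnhds.exists_gt
  have hsub : convexHull ℝ s ⊆ PointedCone.hull ℝ s :=
    convexHull_min PointedCone.subset_hull (PointedCone.hull ℝ s).convex
  simpa [smul_smul, ht.ne'] using (PointedCone.hull ℝ s).smul_mem (inv_nonneg.2 ht.le) (hsub hty)

theorem exists_ne_zero_forall_le_zero_of_zero_notMem_interior {E : Type*} [NormedAddCommGroup E]
    [NormedSpace ℝ E] [FiniteDimensional ℝ E] {s : Set E} (hs : Convex ℝ s) (h0 : 0 ∈ s)
    (hint : 0 ∉ interior s) : ∃ f : Module.Dual ℝ E, f ≠ 0 ∧ ∀ y ∈ s, f y ≤ 0 := by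
  by_cases hne : (interior s).Nonempty
  · obtain ⟨f, hf0, hf⟩ := geometric_hahn_banach_of_nonempty_interior_point hs hint hne
    exact ⟨f, fun h => hf0 (ContinuousLinearMap.coe_injective h), by simpa using hf⟩
  · have hspan : Submodule.span ℝ s < ⊤ := by
      rw [hs.interior_nonempty_iff_affineSpan_eq_top,
        AffineSubspace.affineSpan_eq_top_iff_vectorSpan_eq_top_of_nonempty ℝ E E ⟨0, h0⟩,
        vectorSpan_eq_span_vsub_set_right ℝ h0] at hne
      simpa [lt_top_iff_ne_top] using hne
    obtain ⟨f, hf0, hker⟩ := Submodule.exists_le_ker_of_lt_top _ hspan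
    exact ⟨f, hf0, fun y hy => (hker (Submodule.subset_span hy)).le⟩

theorem hull_range_eq_top_of_isBounded {n ι : Type*} [Fintype n] [DecidableEq n]
    {A : ι → n → ℝ} {a : ι → ℝ} (hP : Bornology.IsBounded {x | ∀ i, 0 ≤ a i - A i ⬝ᵥ x})
    (h0 : (0 : n → ℝ) ∈ {x | ∀ i, 0 ≤ a i - A i ⬝ᵥ x}) :
    PointedCone.hull ℝ (Set.range A) = ⊤ := by
  rw [PointedCone.hull, ← Submodule.span_insert_zero]
  refine PointedCone.hull_eq_top_of_zero_mem_interior_convexHull (by_contra fun hint => ?_)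
  obtain ⟨f, hf0, hf⟩ := exists_ne_zero_forall_le_zero_of_zero_notMem_interior
    (convex_convexHull ℝ _) (subset_convexHull ℝ _ (Set.mem_insert 0 _)) hint
  set v := (dotProductEquiv ℝ n).symm f
  have hv : v ≠ 0 := by simpa [v] using hf0
  have hray (t : ℝ) (ht : 0 ≤ t) : t • v ∈ {x | ∀ i, 0 ≤ a i - A i ⬝ᵥ x} := fun i => by
    have hAv := hf (A i) (subset_convexHull ℝ _ (Set.mem_insert_of_mem _ ⟨i, rfl⟩))
    rw [← (dotProductEquiv ℝ n).apply_symm_apply f, dotProductEquiv_apply_apply,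
      dotProduct_comm] at hAv
    have ha : 0 ≤ a i := by simpa using h0 i
    rw [dotProduct_smul, smul_eq_mul]
    nlinarith
  obtain ⟨R, hR⟩ := isBounded_iff_forall_norm_le.1 hP
  have hvpos : 0 < ‖v‖ := norm_pos_iff.2 hv
  have := hR _ (hray ((|R| + 1) / ‖v‖) (by positivity))
  rw [norm_smul, Real.norm_of_nonneg (by positivity), div_mul_cancel₀ _ hvpos.ne'] at this
  linarith [le_abs_self R]

theorem setOf_forall_abs_le_subset_smul {n : Type*} [Fintype n] {Q : Set (n → ℝ)} {c s ε : ℝ}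
    (hc : 0 ≤ c) (hs : 0 < s) (hcε : s * c < ε) (hQ : Metric.ball 0 ε ⊆ Q) :
    {x : n → ℝ | ∀ i, |x i| ≤ c} ⊆ (1 / s) • Q := by
  intro x hx
  have hx' : ‖x‖ ≤ c :=
    (pi_norm_le_iff_of_nonneg hc).2 fun i => (Real.norm_eq_abs _).trans_le (hx i)
  have hsx : s • x ∈ Q := hQ <| by
    rw [mem_ball_zero_iff, norm_smul, Real.norm_of_nonneg hs.le]
    nlinarith
  simpa [smul_smul, hs.ne'] using Set.smul_mem_smul_set (a := 1 / s) hsx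

end Geometry

section Containment

variable {d : ℕ} {ι κ : Type*} [Fintype ι] [Fintype κ]

/-- The constraints `λ aᵢ - Aᵢ x ≥ 0` of `λP` in the variables `x = X ∘ Sum.inl` together with the
constraints `1 - bⱼ z ≥ 0` of the polar `Q°` in the variables `z = X ∘ Sum.inr`. -/
noncomputable def containmentGens (lam : ℝ) (a : ι → ℝ) (A : ι → Fin d → ℝ) (b : κ → Fin d → ℝ) :
    ι ⊕ κ → MvPolynomial (Fin d ⊕ Fin d) ℝ :=
  Sum.elim (fun m => affinePoly Sum.inl (lam * a m) (A m)) (fun j => affinePoly Sum.inr 1 (b j))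

theorem exists_boxConstraint_mem_truncQuadModule {a : ι → ℝ} {A : ι → Fin d → ℝ}
    {b : κ → Fin d → ℝ} (hA : PointedCone.hull ℝ (Set.range A) = ⊤)
    (hb : PointedCone.hull ℝ (Set.range b) = ⊤) :
    ∃ r, 0 ≤ r ∧ ∀ c, 0 < c → ∃ lam, 0 < lam ∧ ∀ j,
      boxConstraint (Sum.elim (fun (_ : Fin d) => c) (fun (_ : Fin d) => r)) j ∈
        truncQuadModule 1 (containmentGens lam a A b) := by
  obtain ⟨Ux, hUx⟩ := exists_boxConstraint_mem_hull (σ := Fin d ⊕ Fin d) Sum.inl hA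
  obtain ⟨Uz, hUz⟩ := exists_boxConstraint_mem_hull (σ := Fin d ⊕ Fin d) Sum.inr hb
  obtain ⟨r, hUzr, hr⟩ := ((eventually_all.2 fun j => eventually_ge_atTop (∑ m, Uz j m * 1)).and
    (eventually_ge_atTop 0)).exists
  refine ⟨r, hr, fun c hc => ?_⟩
  obtain ⟨lam, hlam, hlamc⟩ := (eventually_all.2 fun j => ContinuousAt.eventually_lt
    (f := fun lam => ∑ m, Ux j m * (lam * a m)) (x₀ := 0) (by fun_prop) continuousAt_const
      (by simpa using hc)).exists_gt
  refine ⟨lam, hlam, ?_⟩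
  rintro ⟨i | i, s⟩
  · exact hull_le_truncQuadModule (Submodule.span_mono (Set.insert_subset_insert
      (Set.range_comp_subset_range Sum.inl _)) (hUx _ _ i s (hlamc (i, s)).le))
  · exact hull_le_truncQuadModule (Submodule.span_mono (Set.insert_subset_insert
      (Set.range_comp_subset_range Sum.inr _)) (hUz (fun _ => 1) _ i s (hUzr (i, s))))

theorem subset_setOf_abs_le_of_boxConstraint_mem {t : ℕ} {lam c r : ℝ} {a : ι → ℝ}
    {A : ι → Fin d → ℝ} {b : κ → Fin d → ℝ}
    (hbox : ∀ j, boxConstraint (Sum.elim (fun (_ : Fin d) => c) (fun (_ : Fin d) => r)) j ∈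
      truncQuadModule t (containmentGens lam a A b)) :
    {x : Fin d → ℝ | ∀ m, 0 ≤ lam * a m - A m ⬝ᵥ x} ⊆ {x | ∀ i, |x i| ≤ c} := by
  intro x hx i
  refine abs_le_of_boxConstraint_mem (x := Sum.elim x 0) (fun s => hbox (Sum.inl i, s)) ?_
  rintro (m | j)
  · simpa [containmentGens, affinePoly, dotProduct] using hx m
  · simp [containmentGens, affinePoly]

theorem exists_isSOS_of_mem_truncQuadModule_sumElim {t : ℕ} {g : ι → MvPolynomial (Fin d ⊕ Fin d) ℝ}
    {h : κ → MvPolynomial (Fin d ⊕ Fin d) ℝ}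
    {p : MvPolynomial (Fin d ⊕ Fin d) ℝ} (hp : p ∈ truncQuadModule t (Sum.elim g h)) :
    ∃ (σ₀ : MvPolynomial (Fin d ⊕ Fin d) ℝ) (σ : ι → MvPolynomial (Fin d ⊕ Fin d) ℝ)
      (τ : κ → MvPolynomial (Fin d ⊕ Fin d) ℝ),
      IsSOS σ₀ ∧ (∀ i, IsSOS (σ i)) ∧ (∀ j, IsSOS (τ j)) ∧ σ₀.totalDegree ≤ 2 * t ∧
      (∀ i, (σ i).totalDegree ≤ 2 * t - 2) ∧ (∀ j, (τ j).totalDegree ≤ 2 * t - 2) ∧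
      p = σ₀ + ∑ i, σ i * g i + ∑ j, τ j * h j := by
  obtain ⟨s₀, s, hs₀, hs, hd₀, hd, rfl⟩ := hp
  exact ⟨s₀, s ∘ Sum.inl, s ∘ Sum.inr, hs₀.isSOS, fun i => (hs _).isSOS, fun j => (hs _).isSOS,
    hd₀, fun i => hd _, fun j => hd _, by simp [Fintype.sum_sum_type, add_assoc]⟩

end Containment

/-- scaled containment: for an H-polytope P and a V-polytope Q,
both with 0 in the interior, some scaled copy λP fits in a box S with
λP ⊆ S ⊆ (1/√d)·Q, and consequently λP ⊆ Q is certified at the initial step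
t = 2 of the sos hierarchy. -/
theorem scaled_containment_initial_step
    {d k l : ℕ} (hd : 0 < d)
    (a : Fin k → ℝ) (A : Fin k → Fin d → ℝ) (b : Fin l → Fin d → ℝ)
    (P : Set (Fin d → ℝ)) (hPdef : P = {x | ∀ i, 0 ≤ a i - A i ⬝ᵥ x})
    (hPbd : Bornology.IsBounded P) (hP0 : (0 : Fin d → ℝ) ∈ interior P)
    (Q : Set (Fin d → ℝ)) (hQdef : Q = convexHull ℝ (Set.range b))
    (hQ0 : (0 : Fin d → ℝ) ∈ interior Q) :
    ∃ lam : ℝ, 0 < lam ∧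
      (∃ c : Fin d → ℝ, (∀ i, 0 < c i) ∧
        {x : Fin d → ℝ | ∀ i, 0 ≤ lam * a i - A i ⬝ᵥ x}
          ⊆ {x : Fin d → ℝ | ∀ i, |x i| ≤ c i} ∧
        {x : Fin d → ℝ | ∀ i, |x i| ≤ c i} ⊆ (1 / Real.sqrt d) • Q) ∧
      (∃ (σ₀ : MvPolynomial (Fin d ⊕ Fin d) ℝ)
         (σ : Fin k → MvPolynomial (Fin d ⊕ Fin d) ℝ)
         (τ : Fin l → MvPolynomial (Fin d ⊕ Fin d) ℝ),
         IsSOS σ₀ ∧ (∀ i, IsSOS (σ i)) ∧ (∀ j, IsSOS (τ j)) ∧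
         σ₀.totalDegree ≤ 4 ∧
         (∀ i, (σ i).totalDegree ≤ 2) ∧ (∀ j, (τ j).totalDegree ≤ 2) ∧
         (1 : MvPolynomial (Fin d ⊕ Fin d) ℝ)
             - ∑ i : Fin d, X (Sum.inl i) * X (Sum.inr i) =
           σ₀ + ∑ i : Fin k, σ i *
                  (C (lam * a i) - ∑ j : Fin d, C (A i j) * X (Sum.inl j))
              + ∑ j : Fin l, τ j *
                  (1 - ∑ i : Fin d, C (b j i) * X (Sum.inr i))) := by
  subst hPdef hQdef
  obtain ⟨r, hr, hbox⟩ := exists_boxConstraint_mem_truncQuadModule (a := a)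
    (hull_range_eq_top_of_isBounded hPbd (interior_subset hP0))
    (PointedCone.hull_eq_top_of_zero_mem_interior_convexHull hQ0)
  obtain ⟨ε, hε, hball⟩ := Metric.mem_nhds_iff.1 (mem_interior_iff_mem_nhds.1 hQ0)
  have hsqrt : 0 < √(d : ℝ) := Real.sqrt_pos.2 (by exact_mod_cast hd)
  obtain ⟨c, hc, hcε, hcr⟩ : ∃ c, 0 < c ∧ √(d : ℝ) * c < ε ∧ d * (c * r) < 1 :=
    ((ContinuousAt.eventually_lt (f := fun c => √(d : ℝ) * c) (x₀ := 0) (by fun_prop)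
      continuousAt_const (by simpa using hε)).and (ContinuousAt.eventually_lt
        (f := fun c => d * (c * r)) (g := fun _ => 1) (x₀ := 0) (by fun_prop) continuousAt_const
          (by simp))).exists_gt
  obtain ⟨lam, hlam, hbox⟩ := hbox c hc
  refine ⟨lam, hlam, ⟨fun _ => c, fun _ => hc, subset_setOf_abs_le_of_boxConstraint_mem hbox,
    setOf_forall_abs_le_subset_smul hc.le hsqrt hcε hball⟩, ?_⟩
  obtain ⟨σ₀, σ, τ, hσ₀, hσ, hτ, hd₀, hdσ, hdτ, heq⟩ :=
    exists_isSOS_of_mem_truncQuadModule_sumElim <| truncQuadModule_le_of_forall_mem_one one_le_two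
      hbox <| one_sub_sum_X_mul_X_mem_truncQuadModule (fun _ => hc) (fun _ => hr)
        (by simpa using hcr.le)
  exact ⟨σ₀, σ, τ, hσ₀, hσ, hτ, hd₀, hdσ, hdτ, by simpa [containmentGens, affinePoly] using heq⟩
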